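/- arXiv:1801.07844 — 8 statements merged into one kernel-verified Lean document; each statement's English description precedes it below -/
import Mathlib

section
/- In a complete binary tree, for any set RL of revoked leaves and any leaf ν ∉ RL, the set Y output by the KUNodes algorithm contains at least one ancestor of ν (where a node is considered an ancestor of itself). Equivalently, Path(ν) ∩ Y ≠ ∅. -/
/-! A non-revoked leaf `ν` is not in `X`, since every node of `X` is a prefix of a revoked leaf of
the same length. If `RL` is nonempty the root is in `X`, so the path from the root down to `ν`
leaves `X` at some step; the first node off `X` is a child of a node of `X`, hence lies in `Y`. -/

open Classical

/-- Nodes of a complete binary tree of height `h` are bit strings of length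
at most `h`; the root is `[]`, leaves have length `h`. `TreePath ν` is the
set of nodes on the path from `ν` to the root, inclusive (the prefixes). -/
def TreePath (ν : List Bool) : Set (List Bool) := {θ | θ <+: ν}

/-- The set `X` in the KUNodes algorithm: the union of the paths from the
revoked leaves in `RL` to the root. -/
def KUX (RL : Set (List Bool)) : Set (List Bool) := ⋃ ν ∈ RL, TreePath ν

/-- The output `Y` of the KUNodes algorithm on a complete binary tree of
height `h`: the children (within the tree) of nodes of `X` that are not
themselves in `X`; if this set is empty, `Y := {root}`. -/
noncomputable def KUNodes (h : ℕ) (RL : Set (List Bool)) : Set (List Bool) :=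
  let X := KUX RL
  let Y := {c : List Bool | ∃ θ ∈ X, ∃ b : Bool, c = θ ++ [b] ∧ c.length ≤ h ∧ c ∉ X}
  if Y = ∅ then {([] : List Bool)} else Y

theorem List.exists_mem_prefix_append_singleton_notMem {α : Type*} {X : Set (List α)}
    (hnil : [] ∈ X) {ν : List α} (hν : ν ∉ X) :
    ∃ θ ∈ X, ∃ b, θ ++ [b] <+: ν ∧ θ ++ [b] ∉ X := by
  induction ν using List.reverseRecOn with
  | nil => exact absurd hnil hν
  | append_singleton μ b ih =>
    by_cases hμ : μ ∈ X
    · exact ⟨μ, hμ, b, List.prefix_refl _, hν⟩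
    · obtain ⟨θ, hθ, b', hpre, hnot⟩ := ih hμ
      exact ⟨θ, hθ, b', hpre.trans (List.prefix_append _ _), hnot⟩

theorem nil_mem_KUX {RL : Set (List Bool)} (hRL : RL.Nonempty) : [] ∈ KUX RL :=
  Set.mem_biUnion hRL.some_mem List.nil_prefix

theorem notMem_KUX_of_length_eq {h : ℕ} {RL : Set (List Bool)}
    (hRL : ∀ ν ∈ RL, ν.length = h) {ν : List Bool} (hν : ν.length = h) (hνRL : ν ∉ RL) :
    ν ∉ KUX RL := by
  simp only [KUX, Set.mem_iUnion₂, TreePath, Set.mem_ofPred_eq, not_exists]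
  intro μ hμ hpre
  exact hνRL (hpre.eq_of_length (hν.trans (hRL μ hμ).symm) ▸ hμ)

theorem KUNodes_empty (h : ℕ) : KUNodes h ∅ = {[]} := by
  simp [KUNodes, KUX]

theorem mem_KUNodes_of_mem_KUX {h : ℕ} {RL : Set (List Bool)} {θ : List Bool}
    (hθ : θ ∈ KUX RL) (b : Bool) (hlen : (θ ++ [b]).length ≤ h) (hnot : θ ++ [b] ∉ KUX RL) :
    θ ++ [b] ∈ KUNodes h RL := by
  have hY : θ ++ [b] ∈ {c : List Bool |
      ∃ θ ∈ KUX RL, ∃ b : Bool, c = θ ++ [b] ∧ c.length ≤ h ∧ c ∉ KUX RL} :=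
    ⟨θ, hθ, b, rfl, hlen, hnot⟩
  simpa only [KUNodes, if_neg (Set.nonempty_iff_ne_empty.mp ⟨_, hY⟩)] using hY

/-- For any revocation list `RL` of leaves and any non-revoked leaf `ν`, the
output `Y` of KUNodes contains at least one ancestor of `ν` (a node being
its own ancestor): `Path(ν) ∩ Y ≠ ∅`. -/
theorem kunodes_covers_nonrevoked (h : ℕ) (RL : Set (List Bool))
    (hRL : ∀ ν ∈ RL, ν.length = h) (ν : List Bool) (hν : ν.length = h)
    (hνRL : ν ∉ RL) :
    (TreePath ν ∩ KUNodes h RL).Nonempty := by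
  rcases RL.eq_empty_or_nonempty with rfl | hne
  · exact ⟨[], List.nil_prefix, by simp [KUNodes_empty]⟩
  obtain ⟨θ, hθ, b, hpre, hnot⟩ := List.exists_mem_prefix_append_singleton_notMem
    (nil_mem_KUX hne) (notMem_KUX_of_length_eq hRL hν hνRL)
  exact ⟨θ ++ [b], hpre, mem_KUNodes_of_mem_KUX hθ b (hν ▸ hpre.length_le) hnot⟩
end

section
/- In a complete binary tree with N = 2^h leaves, if RL is a set of r ≥ 1 revoked leaves, then the output Y of the KUNodes algorithm has cardinality at most r · h, i.e., |Y| ≤ r · log₂ N. -/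
open Classical

/-- In a complete binary tree with `N = 2^h` leaves, if `RL` is a set of
`r ≥ 1` revoked leaves, then the output `Y` of KUNodes has cardinality at
most `r · h = r · log₂ N`. -/
theorem kunodes_card_le (h r : ℕ) (hh : 1 ≤ h) (hr : 1 ≤ r) (RL : Finset (List Bool))
    (hcard : RL.card = r) (hRL : ∀ ν ∈ RL, ν.length = h) :
    (KUNodes h (↑RL : Set (List Bool))).ncard ≤ r * h := by
  set X := KUX (↑RL : Set (List Bool)) with hX
  set Y := {c : List Bool | ∃ θ ∈ X, ∃ b : Bool, c = θ ++ [b] ∧ c.length ≤ h ∧ c ∉ X}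
    with hY
  have hKU : KUNodes h (↑RL : Set (List Bool)) = if Y = ∅ then {([] : List Bool)} else Y := rfl
  rw [hKU]
  by_cases hE : Y = ∅
  · simp only [hE, if_pos]
    rw [Set.ncard_singleton]
    exact le_trans (by norm_num) (Nat.mul_le_mul hr hh)
  · simp only [hE, if_neg, if_false]
    -- target finset: union over RL of nonempty prefixes
    set T : Finset (List Bool) := RL.biUnion (fun ν => ν.inits.toFinset.erase []) with hT
    have hTcard : T.card ≤ r * h := by
      calc T.card ≤ ∑ ν ∈ RL, (ν.inits.toFinset.erase []).card := Finset.card_biUnion_le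
        _ ≤ ∑ ν ∈ RL, h := by
            apply Finset.sum_le_sum
            intro ν hν
            have h1 : ([] : List Bool) ∈ ν.inits.toFinset := by
              simp [List.mem_inits]
            have h2 := Finset.card_erase_of_mem h1
            have h3 : ν.inits.toFinset.card ≤ ν.length + 1 := by
              calc ν.inits.toFinset.card ≤ ν.inits.length := ν.inits.toFinset_card_le
                _ = ν.length + 1 := by simp
            have h4 := hRL ν hν
            rw [h2]
            omega
        _ = r * h := by rw [Finset.sum_const, hcard, smul_eq_mul]
    -- injection from Y into T
    have hmaps : Set.MapsTo (fun c : List Bool => c.dropLast ++ [!c.getLastD true]) Y ↑T := by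
      rintro c ⟨θ, hθX, b, rfl, hlen, hcX⟩
      simp only [List.dropLast_concat, List.getLastD_concat]
      -- θ ∈ X: θ <+: ν for some ν ∈ RL
      obtain ⟨ν, hν, hpre⟩ : ∃ ν ∈ RL, θ <+: ν := by
        simpa [hX, KUX, TreePath] using hθX
      obtain ⟨t, ht⟩ := hpre
      have hlt : θ.length < ν.length := by
        have := hRL ν hν
        simp at hlen
        omega
      -- t nonempty
      match t, ht with
      | [], ht => simp [← ht] at hlt
      | b' :: t', ht =>
        have hb' : θ ++ [b'] <+: ν := ⟨t', by simpa using ht⟩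
        have hbne : b' ≠ b := by
          rintro rfl
          exact hcX (Set.mem_biUnion hν hb')
        have : b' = !b := by
          cases b <;> cases b' <;> simp_all
        subst this
        show θ ++ [!b] ∈ T
        rw [hT, Finset.mem_biUnion]
        refine ⟨ν, hν, ?_⟩
        rw [Finset.mem_erase]
        exact ⟨by simp, by rw [List.mem_toFinset, List.mem_inits]; exact hb'⟩
    have hinj : Set.InjOn (fun c : List Bool => c.dropLast ++ [!c.getLastD true]) Y := by
      rintro c1 ⟨θ1, _, b1, rfl, _, _⟩ c2 ⟨θ2, _, b2, rfl, _, _⟩ heq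
      simp only [List.dropLast_concat, List.getLastD_concat] at heq
      have h1 := List.append_inj' heq rfl
      obtain ⟨rfl, h2⟩ := h1
      simp at h2
      rw [h2]
    calc Y.ncard ≤ (↑T : Set (List Bool)).ncard :=
          Set.ncard_le_ncard_of_injOn _ hmaps hinj T.finite_toSet
      _ = T.card := by rw [Set.ncard_coe_finset]
      _ ≤ r * h := hTcard
end

section
/- The nodes in the output Y of the KUNodes algorithm have pairwise disjoint leaf-descendant sets: for distinct θ, θ' ∈ Y, no leaf is a descendant of both θ and θ'. -/
/-!
The output of KUNodes is an antichain for the prefix order. In the nontrivial case every output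
node is a child `τ ++ [c]` of some `τ ∈ X` and lies outside `X`; a proper prefix of `τ ++ [c]` is
a prefix of `τ`, hence in the prefix-closed set `X`, so it is not an output node. Two nodes with a
common leaf descendant are both prefixes of that leaf, hence comparable, hence equal.
-/

open Classical

theorem mem_KUX_of_prefix {RL : Set (List Bool)} {a b : List Bool} (hab : a <+: b)
    (hb : b ∈ KUX RL) : a ∈ KUX RL := by
  simp only [KUX, TreePath, Set.mem_iUnion, Set.mem_ofPred_eq] at hb ⊢
  obtain ⟨ν, hν, hbν⟩ := hb
  exact ⟨ν, hν, hab.trans hbν⟩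

theorem isAntichain_prefix_KUNodes (h : ℕ) (RL : Set (List Bool)) :
    IsAntichain (· <+: ·) (KUNodes h RL) := by
  intro a ha b hb hab hpre
  unfold KUNodes at ha hb
  simp only at ha hb
  split_ifs at ha hb
  · exact hab (ha.trans hb.symm)
  · obtain ⟨-, -, -, -, -, haX⟩ := ha
    obtain ⟨τ, hτX, c, rfl, -, -⟩ := hb
    rcases List.prefix_concat_iff.mp hpre with rfl | haτ
    · exact hab rfl
    · exact haX (mem_KUX_of_prefix haτ hτX)

theorem kunodes_pairwise_disjoint_descendants_general (h : ℕ) (RL : Set (List Bool))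
    (θ θ' : List Bool)
    (hθ : θ ∈ KUNodes h RL) (hθ' : θ' ∈ KUNodes h RL) (hne : θ ≠ θ') :
    ¬ ∃ ℓ : List Bool, ℓ.length = h ∧ θ ∈ TreePath ℓ ∧ θ' ∈ TreePath ℓ := by
  rintro ⟨ℓ, -, hθℓ, hθ'ℓ⟩
  have hanti := isAntichain_prefix_KUNodes h RL
  rcases List.prefix_or_prefix_of_prefix hθℓ hθ'ℓ with hp | hp
  · exact hanti hθ hθ' hne hp
  · exact hanti hθ' hθ hne.symm hp

/-- The nodes output by KUNodes have pairwise disjoint sets of leaf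
descendants: for distinct `θ, θ' ∈ Y`, no leaf `ℓ` is a descendant of both
(`ℓ` is a descendant of `θ` iff `θ ∈ Path(ℓ)`). -/
theorem kunodes_pairwise_disjoint_descendants (h : ℕ) (RL : Set (List Bool))
    (hRL : ∀ ν ∈ RL, ν.length = h) (θ θ' : List Bool)
    (hθ : θ ∈ KUNodes h RL) (hθ' : θ' ∈ KUNodes h RL) (hne : θ ≠ θ') :
    ¬ ∃ ℓ : List Bool, ℓ.length = h ∧ θ ∈ TreePath ℓ ∧ θ' ∈ TreePath ℓ :=
  kunodes_pairwise_disjoint_descendants_general h RL θ θ' hθ hθ' hne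
end

section
/- Let q ≥ 2 and let G : ZMod q → (ZMod q)^{n×m} with the property that for every U ∈ (ZMod q)^{n×m} there is X ∈ {0,1}^{m×m} ⊆ (ZMod q)^{m×m} with G·X = U (G is the primitive matrix and X = G⁻¹(U)). Then for any scalars x₁,…,x_ℓ ∈ ZMod q and matrices A₁,…,A_ℓ ∈ (ZMod q)^{n×m}, the matrix A_x := ∑_{i=1}^ℓ A_i · G⁻¹(x_i·G) satisfies: for any s ∈ (ZMod q)^n and y₁,…,y_ℓ ∈ ZMod q, ∑_{i=1}^ℓ (G⁻¹(x_i·G))ᵀ · ((A_i + y_i·G)ᵀ s) = (A_x + (∑_i x_i y_i)·G)ᵀ s. -/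
open Matrix Finset

/-- Inner-product homomorphism of the AFV predicate encryption scheme.
`G` is the primitive matrix with inversion map `Ginv` satisfying
`G * Ginv U = U` and `Ginv U` has `{0,1}` entries. For predicate vector `x`
and matrices `A i`, set `A_x := ∑ i, A i * Ginv (x i • G)`. Then for any
attribute vector `y` and any `s`,
`∑ i, (Ginv (x i • G))ᵀ *ᵥ ((A i + y i • G)ᵀ *ᵥ s)
  = (A_x + (∑ i, x i * y i) • G)ᵀ *ᵥ s`. -/
theorem afv_inner_product_homomorphism
    (q n m ℓ : ℕ) (hq : 2 ≤ q)
    (G : Matrix (Fin n) (Fin m) (ZMod q))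
    (Ginv : Matrix (Fin n) (Fin m) (ZMod q) → Matrix (Fin m) (Fin m) (ZMod q))
    (hGinv01 : ∀ U, ∀ i j, Ginv U i j = 0 ∨ Ginv U i j = 1)
    (hGinv : ∀ U, G * Ginv U = U)
    (x : Fin ℓ → ZMod q) (A : Fin ℓ → Matrix (Fin n) (Fin m) (ZMod q))
    (s : Fin n → ZMod q) (y : Fin ℓ → ZMod q) :
    ∑ i, (Ginv (x i • G))ᵀ *ᵥ ((A i + y i • G)ᵀ *ᵥ s)
      = ((∑ i, A i * Ginv (x i • G)) + (∑ i, x i * y i) • G)ᵀ *ᵥ s := by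
  have key : ∀ i : Fin ℓ, (Ginv (x i • G))ᵀ *ᵥ ((A i + y i • G)ᵀ *ᵥ s)
      = ((A i * Ginv (x i • G)) + (x i * y i) • G)ᵀ *ᵥ s := by
    intro i
    rw [mulVec_mulVec, ← transpose_mul]
    congr 1
    rw [Matrix.add_mul, Matrix.smul_mul, hGinv, smul_smul, mul_comm (y i)]
  have sumv : ∀ (f : Fin ℓ → Matrix (Fin m) (Fin n) (ZMod q)),
      (∑ i, f i) *ᵥ s = ∑ i, f i *ᵥ s := by
    intro f; ext j
    simp only [Matrix.mulVec, dotProduct, Matrix.sum_apply,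
      Finset.sum_mul]
    rw [Finset.sum_comm]; simp [Matrix.mulVec, dotProduct]
  rw [Finset.sum_congr rfl (fun i _ => key i)]
  simp only [transpose_add, transpose_sum, Matrix.add_mulVec,
    transpose_smul, smul_mulVec, Finset.sum_add_distrib, ← Finset.sum_smul, sumv]
end

section
/- With the same setup as the inner-product homomorphism, in the noisy setting: if c_i = (A_i + y_i·G)ᵀ s + R_iᵀ e₁ for i ∈ [ℓ], then c_x := ∑_{i=1}^ℓ (G⁻¹(x_i·G))ᵀ c_i equals (A_x + ⟨x,y⟩·G)ᵀ s + R_xᵀ e₁, where A_x = ∑_i A_i G⁻¹(x_i·G) and R_x = ∑_i R_i G⁻¹(x_i·G). -/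
open Matrix Finset

theorem sum_mulVec_aux {ι m' n' : Type*} [Fintype ι] [Fintype n'] {α : Type*} [NonUnitalNonAssocSemiring α]
    (M : ι → Matrix m' n' α) (v : n' → α) :
    (∑ i, M i) *ᵥ v = ∑ i, M i *ᵥ v := by
  ext j
  simp [mulVec, dotProduct, Matrix.sum_apply, Finset.sum_mul]
  exact Finset.sum_comm

/-- Noisy inner-product homomorphism of the AFV scheme. If
`c i = (A i + y i • G)ᵀ *ᵥ s + (R i)ᵀ *ᵥ e₁` for each `i`, then
`∑ i, (Ginv (x i • G))ᵀ *ᵥ c i = (A_x + ⟨x,y⟩ • G)ᵀ *ᵥ s + R_xᵀ *ᵥ e₁`,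
where `A_x = ∑ i, A i * Ginv (x i • G)` and `R_x = ∑ i, R i * Ginv (x i • G)`. -/
theorem afv_noisy_inner_product_homomorphism
    (q n m ℓ : ℕ) (hq : 2 ≤ q)
    (G : Matrix (Fin n) (Fin m) (ZMod q))
    (Ginv : Matrix (Fin n) (Fin m) (ZMod q) → Matrix (Fin m) (Fin m) (ZMod q))
    (hGinv01 : ∀ U, ∀ i j, Ginv U i j = 0 ∨ Ginv U i j = 1)
    (hGinv : ∀ U, G * Ginv U = U)
    (x y : Fin ℓ → ZMod q)
    (A : Fin ℓ → Matrix (Fin n) (Fin m) (ZMod q))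
    (R : Fin ℓ → Matrix (Fin m) (Fin m) (ZMod q))
    (s : Fin n → ZMod q) (e₁ : Fin m → ZMod q)
    (c : Fin ℓ → (Fin m → ZMod q))
    (hc : ∀ i, c i = (A i + y i • G)ᵀ *ᵥ s + (R i)ᵀ *ᵥ e₁) :
    ∑ i, (Ginv (x i • G))ᵀ *ᵥ c i
      = ((∑ i, A i * Ginv (x i • G)) + (∑ i, x i * y i) • G)ᵀ *ᵥ s
        + (∑ i, R i * Ginv (x i • G))ᵀ *ᵥ e₁ := by
  have key : ∀ i, (Ginv (x i • G))ᵀ *ᵥ c i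
      = ((A i * Ginv (x i • G)) + (x i * y i) • G)ᵀ *ᵥ s
        + (R i * Ginv (x i • G))ᵀ *ᵥ e₁ := by
    intro i
    rw [hc, mulVec_add, mulVec_mulVec, mulVec_mulVec, ← transpose_mul, ← transpose_mul,
      Matrix.add_mul, Matrix.smul_mul, hGinv, smul_smul, mul_comm (y i)]
  simp only [key]
  rw [Finset.sum_add_distrib]
  congr 1
  · rw [show (∑ i, A i * Ginv (x i • G)) + (∑ i, x i * y i) • G
        = ∑ i, (A i * Ginv (x i • G) + (x i * y i) • G) by
      rw [Finset.sum_add_distrib, Finset.sum_smul]]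
    rw [Matrix.transpose_sum, sum_mulVec_aux]
  · rw [Matrix.transpose_sum, sum_mulVec_aux]
end

section
/- Let q be an odd prime with q ≥ 5, and let the rounding map be round(c) = ⌊(2/q)·c⌉ applied coordinate-wise to representatives in (−q/2, q/2]. If d = encode(M)·⌊q/2⌋ + err in (ZMod q)^κ, where M ∈ {0,1} and every coordinate of err has a representative of absolute value less than q/5, then round(d) = encode(M). -/
/-- The rounded bit of `c ∈ ZMod q`: identify `c` with its representative
`valMinAbs c ∈ (−q/2, q/2]`, compute the nearest integer to `2c/q`
(rounding half up), and reduce mod `2`. -/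
noncomputable def roundBit (q : ℕ) (c : ZMod q) : ℤ :=
  (round ((2 * (c.valMinAbs : ℚ)) / (q : ℚ))) % 2

lemma round_eq_of_bounds (x : ℚ) (n : ℤ) (h1 : (n : ℚ) - 1/2 ≤ x) (h2 : x < (n : ℚ) + 1/2) :
    round x = n := by
  rw [round_eq, Int.floor_eq_iff]
  constructor <;> linarith

/-- Correct decoding: let `q ≥ 5` be an odd prime. If
`d = encode(M)·⌊q/2⌋ + err` in `(ZMod q)^κ`, where `M ∈ {0,1}` and every
coordinate of `err` has representative of absolute value less than `q/5`,
then rounding `2d/q` coordinate-wise (mod 2) recovers `encode(M)`. -/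
theorem round_decode (q : ℕ) (hq : q.Prime) (hodd : Odd q) (hq5 : 5 ≤ q)
    (κ : ℕ) (M : ℕ) (hM : M ≤ 1)
    (d err : Fin κ → ZMod q)
    (herr : ∀ j, ((err j).valMinAbs : ℚ) < (q : ℚ) / 5
              ∧ -((q : ℚ) / 5) < ((err j).valMinAbs : ℚ))
    (hd : d = ((q / 2 : ℕ) : ZMod q)
            • (fun j : Fin κ => if (j : ℕ) = 0 then (M : ZMod q) else 0)
            + err) :
    ∀ j : Fin κ, roundBit q (d j) = if (j : ℕ) = 0 then (M : ℤ) else 0 := by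
  intro j
  haveI : NeZero q := ⟨hq.ne_zero⟩
  have hq0 : (0 : ℚ) < (q : ℚ) := by positivity
  set e : ℤ := (err j).valMinAbs with he
  have herr1 : (e : ℚ) < (q : ℚ) / 5 := (herr j).1
  have herr2 : -((q : ℚ) / 5) < (e : ℚ) := (herr j).2
  have h5e1 : 5 * e < (q : ℤ) := by
    have : (5 : ℚ) * (e : ℚ) < (q : ℚ) := by linarith
    exact_mod_cast this
  have h5e2 : -(q : ℤ) < 5 * e := by
    have : -(q : ℚ) < 5 * (e : ℚ) := by linarith
    exact_mod_cast this
  have hq5' : (5 : ℤ) ≤ (q : ℤ) := by exact_mod_cast hq5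
  have hdj : d j = ((q / 2 : ℕ) : ZMod q) * (if (j : ℕ) = 0 then (M : ZMod q) else 0) + err j := by
    rw [hd]; rfl
  obtain ⟨k, hk⟩ := hodd
  have hqdiv : (q / 2 : ℕ) = k := by omega
  -- the easy case: coordinate is just the error
  have zero_case : (d j).valMinAbs = e → roundBit q (d j) = 0 := by
    intro hval
    simp only [roundBit, hval]
    rw [round_eq_of_bounds _ 0]
    · simp
    · push_cast
      rw [le_div_iff₀ hq0]
      linarith
    · push_cast
      rw [div_lt_iff₀ hq0]
      linarith
  by_cases hj : (j : ℕ) = 0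
  · rcases Nat.le_one_iff_eq_zero_or_eq_one.mp hM with hM0 | hM1
    · -- M = 0
      have hdj' : d j = err j := by simp [hdj, hj, hM0]
      rw [zero_case (by rw [hdj']), hj, hM0]
      simp
    · -- M = 1
      have hdj' : d j = ((q / 2 : ℕ) : ZMod q) + err j := by simp [hdj, hj, hM1]
      set v : ℤ := if e ≤ 0 then (k : ℤ) + e else (k : ℤ) + e - q with hv
      have hecast : ((e : ℤ) : ZMod q) = err j := ZMod.coe_valMinAbs _
      have hcast : ((v : ℤ) : ZMod q) = d j := by
        rw [hdj', hqdiv, hv]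
        split_ifs
        · push_cast [hecast]; ring
        · push_cast [hecast, ZMod.natCast_self]; ring
      have hval : (d j).valMinAbs = v := by
        rw [ZMod.valMinAbs_spec]
        refine ⟨hcast.symm, ?_, ?_⟩ <;> rw [hv] <;> split_ifs <;> push_cast <;> omega
      simp only [roundBit, hval, hj, hM1, if_pos, Nat.cast_one]
      have hkq : (2:ℚ) * (k:ℚ) = (q:ℚ) - 1 := by
        have : (q:ℚ) = 2 * (k:ℚ) + 1 := by exact_mod_cast congrArg (Nat.cast : ℕ → ℚ) hk
        linarith
      rw [hv]
      split_ifs with hcase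
      · -- e ≤ 0 : value is k + e, round to 1
      
        have hI1 : (2 : ℤ) ≤ (q : ℤ) + 4 * e := by omega
        have hI1' : (2 : ℚ) ≤ (q : ℚ) + 4 * (e:ℚ) := by exact_mod_cast hI1
        have he0 : (e : ℚ) ≤ 0 := by exact_mod_cast hcase
        rw [round_eq_of_bounds _ 1]
        · decide
        · push_cast
          rw [le_div_iff₀ hq0]
          linarith
        · push_cast
          rw [div_lt_iff₀ hq0]
          linarith
      · -- e ≥ 1 : value is k + e - q, round to -1
        have hcase' : (1 : ℤ) ≤ e := by omega
        have he1 : (1 : ℚ) ≤ (e : ℚ) := by exact_mod_cast hcase'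
        have hI2 : 4 * e < (q : ℤ) + 2 := by omega
        have hI2' : 4 * (e:ℚ) < (q : ℚ) + 2 := by exact_mod_cast hI2
        rw [round_eq_of_bounds _ (-1)]
        · decide
        · push_cast
          rw [le_div_iff₀ hq0]
          have hq5'' : (5:ℚ) ≤ (q:ℚ) := by exact_mod_cast hq5
          linarith
        · push_cast
          rw [div_lt_iff₀ hq0]
          linarith
  · -- j ≠ 0
    have hdj' : d j = err j := by simp [hdj, hj]
    rw [zero_case (by rw [hdj']), if_neg hj]
end

section
/- If a random vector d is uniformly distributed over (ZMod q)^κ with q ≥ 5 odd, then the probability that the last κ−1 coordinates of ⌊(2/q)·d⌉ mod 2 are all zero is at most (⌈q/4⌉·2/q)^{κ−1} ≤ (3/5)^{κ−1}; in particular this probability tends to 0 exponentially in κ. -/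
/-!
A residue `c` has rounded bit `0` exactly when its centred representative `x` satisfies
`-q ≤ 4x < q`, so at most `⌊(q-1)/4⌋ + ⌊q/4⌋ + 1 ≤ 3q/5` residues do. The favourable vectors
form a product set, free in the first coordinate and confined to those residues in the other
`κ - 1`, so their proportion is at most `(3/5)^(κ-1)`.
-/

open Classical Finset

lemma abs_round_two_mul_valMinAbs_div_le_one {q : ℕ} [NeZero q] (c : ZMod q) :
    |round (2 * (c.valMinAbs : ℚ) / q)| ≤ 1 := by
  have hq : (0 : ℚ) < q := by simp [Nat.pos_of_neZero]
  set y : ℚ := 2 * (c.valMinAbs : ℚ) / q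
  obtain ⟨hlo, hhi⟩ := c.valMinAbs_mem_Ioc
  have hy_lo : -1 < y := by
    rw [lt_div_iff₀ hq]; linarith [show -(q : ℚ) < c.valMinAbs * 2 by exact_mod_cast hlo]
  have hy_hi : y ≤ 1 := by
    rw [div_le_iff₀ hq]; linarith [show (c.valMinAbs : ℚ) * 2 ≤ q by exact_mod_cast hhi]
  obtain ⟨hr_lo, hr_hi⟩ := abs_le.mp (abs_sub_round y)
  have h1 : -2 < round y := by exact_mod_cast (by linarith : (-2 : ℚ) < round y)
  have h2 : round y < 2 := by exact_mod_cast (by linarith : (round y : ℚ) < 2)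
  rw [abs_le]
  omega

lemma roundBit_eq_zero_iff {q : ℕ} [NeZero q] (c : ZMod q) :
    roundBit q c = 0 ↔ -(q : ℤ) ≤ 4 * c.valMinAbs ∧ 4 * c.valMinAbs < q := by
  have hq : (0 : ℚ) < q := by simp [Nat.pos_of_neZero]
  have hr := abs_round_two_mul_valMinAbs_div_le_one c
  -- `round` takes only the values `-1, 0, 1` here, and `Int.emod` sends both `±1` to `1`.
  have hbit : roundBit q c = 0 ↔ round (2 * (c.valMinAbs : ℚ) / q) = 0 := by
    rw [roundBit, abs_le] at *
    omega
  rw [hbit, round_eq_zero_iff, Set.mem_Ico, le_div_iff₀ hq, div_lt_iff₀ hq]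
  qify
  constructor <;> rintro ⟨h1, h2⟩ <;> constructor <;> linarith

lemma card_roundBit_eq_zero_le (q : ℕ) [NeZero q] :
    #{c : ZMod q | roundBit q c = 0} ≤ (q - 1) / 4 + q / 4 + 1 := by
  calc #{c : ZMod q | roundBit q c = 0}
      ≤ #(Icc (-((q : ℤ) / 4)) (((q : ℤ) - 1) / 4)) := by
        refine card_le_card_of_injOn ZMod.valMinAbs (fun c hc => ?_)
          (fun a _ b _ h => ZMod.valMinAbs_inj.mp h)
        have := (roundBit_eq_zero_iff c).mp (mem_filter.mp hc).2
        rw [coe_Icc, Set.mem_Icc]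
        omega
    _ = (q - 1) / 4 + q / 4 + 1 := by
        have := NeZero.ne q
        rw [Int.card_Icc]
        omega

lemma card_filter_forall_ne_zero {α : Type*} [Fintype α] (p : α → Prop) [DecidablePred p]
    (n : ℕ) : #{d : Fin (n + 1) → α | ∀ j : Fin (n + 1), (j : ℕ) ≠ 0 → p (d j)}
      = Fintype.card α * #{a | p a} ^ n := by
  have h : ({d : Fin (n + 1) → α | ∀ j : Fin (n + 1), (j : ℕ) ≠ 0 → p (d j)} : Finset _)
      = Fintype.piFinset (Fin.cons univ fun _ => univ.filter p) := by
    ext d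
    simp [Fin.forall_fin_succ, Fintype.mem_piFinset]
  rw [h, Fintype.card_piFinset, Fin.prod_univ_succ]
  simp

theorem round_uniform_tail_bound_general (q : ℕ) [NeZero q] (hq : 5 ≤ q) (κ : ℕ) :
    ((Finset.univ.filter
        (fun d : Fin κ → ZMod q => ∀ j : Fin κ, (j : ℕ) ≠ 0 → roundBit q (d j) = 0)).card : ℚ)
      / (q : ℚ) ^ κ ≤ (3 / 5 : ℚ) ^ (κ - 1) := by
  cases κ with
  | zero => simp
  | succ n =>
    have hq0 : (0 : ℚ) < q := by positivity
    have hratio : (#{c : ZMod q | roundBit q c = 0} : ℚ) / q ≤ 3 / 5 := by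
      rw [div_le_iff₀ hq0]
      have := card_roundBit_eq_zero_le q
      have h : (5 * #{c : ZMod q | roundBit q c = 0} : ℚ) ≤ 3 * q := by
        exact_mod_cast (by omega : 5 * #{c : ZMod q | roundBit q c = 0} ≤ 3 * q)
      linarith
    rw [card_filter_forall_ne_zero (roundBit q · = 0), ZMod.card, Nat.add_sub_cancel]
    calc ((q * #{c : ZMod q | roundBit q c = 0} ^ n : ℕ) : ℚ) / q ^ (n + 1)
        = ((#{c : ZMod q | roundBit q c = 0} : ℚ) / q) ^ n := by
          push_cast
          rw [div_pow, pow_succ']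
          field_simp
      _ ≤ (3 / 5) ^ n := pow_le_pow_left₀ (by positivity) hratio n

/-- If `d` is uniformly distributed over `(ZMod q)^κ` with `q ≥ 5` odd, the
probability that the last `κ − 1` rounded bits of `⌊(2/q)·d⌉` are all zero
is at most `(3/5)^{κ−1}`; in particular it tends to `0` exponentially
in `κ`. (The probability is the number of favourable outcomes divided by
the total number `q^κ` of outcomes.) -/
theorem round_uniform_tail_bound (q : ℕ) [NeZero q] (hq : 5 ≤ q) (hodd : Odd q) (κ : ℕ) :
    ((Finset.univ.filter
        (fun d : Fin κ → ZMod q => ∀ j : Fin κ, (j : ℕ) ≠ 0 → roundBit q (d j) = 0)).card : ℚ)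
      / (q : ℚ) ^ κ ≤ (3 / 5 : ℚ) ^ (κ - 1) :=
  round_uniform_tail_bound_general q hq κ
end

section
/- (Error accumulation bound for the SR-PE decryption.) Suppose ‖e‖_∞ ≤ B, ‖e₁‖_∞ ≤ B, ‖e₂‖_∞ ≤ B; Z₁, Z₂ ∈ ℤ^{2m×m} with entries bounded by β; Z ∈ ℤ^{3m×κ} with entries bounded by β; R_x, S_x, R̄ ∈ ℤ^{m×m} with entries bounded by ℓm (resp. m for R̄). Define err' = Z₁ᵀ[e₁; R_xᵀe₁] + Z₂ᵀ[e₁; R̄ᵀe₁] ∈ ℤ^m and err = e − Zᵀ[e₂; S_xᵀe₂; err'] ∈ ℤ^κ. Then ‖err‖_∞ ≤ B + 3mβ · max(B, ℓm²B, 4mβ·ℓm²B) ≤ B(1 + 3mβ·ℓm² · (1 + 4mβ)). -/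
open Matrix

lemma mv_bound {ι μ : Type*} [Fintype ι] (M : Matrix ι μ ℤ) (x : ι → ℤ)
    (c d : ℤ) (hM : ∀ i j, |M i j| ≤ c) (hx : ∀ i, |x i| ≤ d)
    (j : μ) : |(Mᵀ *ᵥ x) j| ≤ (Fintype.card ι : ℤ) * c * d := by
  have : (Mᵀ *ᵥ x) j = ∑ i, M i j * x i := by
    simp [Matrix.mulVec, dotProduct, Matrix.transpose]
  rw [this]
  calc |∑ i, M i j * x i| ≤ ∑ i, |M i j * x i| := Finset.abs_sum_le_sum_abs _ _
    _ ≤ ∑ _i : ι, c * d := by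
        apply Finset.sum_le_sum
        intro i _
        rw [abs_mul]
        exact mul_le_mul (hM i j) (hx i) (abs_nonneg _)
          (le_trans (abs_nonneg _) (hM i j))
    _ = (Fintype.card ι : ℤ) * c * d := by
        simp [Finset.sum_const, mul_assoc]

/-- Error accumulation bound for SR-PE decryption. With
`‖e‖_∞, ‖e₁‖_∞, ‖e₂‖_∞ ≤ B`; `Z₁, Z₂ ∈ ℤ^{2m×m}` and `Z ∈ ℤ^{3m×κ}` with
entries bounded by `β`; `R_x, S_x` with entries bounded by `ℓm` and `R̄`
with entries bounded by `m`; setting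
`err' = Z₁ᵀ[e₁; R_xᵀe₁] + Z₂ᵀ[e₁; R̄ᵀe₁]` and
`err = e − Zᵀ[e₂; S_xᵀe₂; err']`, one has
`‖err‖_∞ ≤ B + 3mβ·max(B, ℓm²B, 4mβ·ℓm²B) ≤ B(1 + 3mβ·ℓm²·(1 + 4mβ))`. -/
theorem srpe_error_bound (m κ ℓ : ℕ) (B β : ℕ)
    (hm : 1 ≤ m) (hκ : 1 ≤ κ) (hℓ : 1 ≤ ℓ) (hB : 1 ≤ B) (hβ : 1 ≤ β)
    (e : Fin κ → ℤ) (e₁ e₂ : Fin m → ℤ)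
    (he : ∀ j, |e j| ≤ (B : ℤ)) (he₁ : ∀ j, |e₁ j| ≤ (B : ℤ))
    (he₂ : ∀ j, |e₂ j| ≤ (B : ℤ))
    (Z₁ Z₂ : Matrix (Fin m ⊕ Fin m) (Fin m) ℤ)
    (hZ₁ : ∀ a b, |Z₁ a b| ≤ (β : ℤ)) (hZ₂ : ∀ a b, |Z₂ a b| ≤ (β : ℤ))
    (Z : Matrix (Fin m ⊕ (Fin m ⊕ Fin m)) (Fin κ) ℤ)
    (hZ : ∀ a b, |Z a b| ≤ (β : ℤ))
    (Rx Sx Rbar : Matrix (Fin m) (Fin m) ℤ)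
    (hRx : ∀ a b, |Rx a b| ≤ (ℓ : ℤ) * m) (hSx : ∀ a b, |Sx a b| ≤ (ℓ : ℤ) * m)
    (hRbar : ∀ a b, |Rbar a b| ≤ (m : ℤ)) :
    (∀ j, |(e - Zᵀ *ᵥ Sum.elim e₂ (Sum.elim (Sxᵀ *ᵥ e₂)
              (Z₁ᵀ *ᵥ Sum.elim e₁ (Rxᵀ *ᵥ e₁)
                + Z₂ᵀ *ᵥ Sum.elim e₁ (Rbarᵀ *ᵥ e₁)))) j|
        ≤ (B : ℤ) + 3 * m * β *
            max (max (B : ℤ) ((ℓ : ℤ) * m ^ 2 * B))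
              (4 * m * β * ((ℓ : ℤ) * m ^ 2 * B)))
    ∧ (B : ℤ) + 3 * m * β *
          max (max (B : ℤ) ((ℓ : ℤ) * m ^ 2 * B))
            (4 * m * β * ((ℓ : ℤ) * m ^ 2 * B))
        ≤ (B : ℤ) * (1 + 3 * m * β * ℓ * m ^ 2 * (1 + 4 * m * β)) := by
  have hm' : (1:ℤ) ≤ m := by exact_mod_cast hm
  have hℓ' : (1:ℤ) ≤ ℓ := by exact_mod_cast hℓ
  have hB' : (1:ℤ) ≤ B := by exact_mod_cast hB
  have hβ' : (1:ℤ) ≤ β := by exact_mod_cast hβ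
  set M1 : ℤ := (ℓ : ℤ) * m ^ 2 * B with hM1
  clear_value M1
  have hm2 : (1:ℤ) ≤ (m:ℤ) ^ 2 := by nlinarith
  have hℓm2 : (1:ℤ) ≤ (ℓ:ℤ) * m ^ 2 := by nlinarith
  have hM1pos : (1:ℤ) ≤ M1 := by rw [hM1]; nlinarith
  have hBM1 : (B:ℤ) ≤ M1 := by rw [hM1]; nlinarith
  -- bound on Rxᵀ e₁
  have hRxe : ∀ j, |(Rxᵀ *ᵥ e₁) j| ≤ M1 := by
    intro j
    have := mv_bound Rx e₁ ((ℓ:ℤ) * m) (B:ℤ) hRx he₁ j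
    simp only [Fintype.card_fin] at this
    calc |(Rxᵀ *ᵥ e₁) j| ≤ (m:ℤ) * ((ℓ:ℤ) * m) * B := this
      _ = M1 := by rw [hM1]; ring
  have hSxe : ∀ j, |(Sxᵀ *ᵥ e₂) j| ≤ M1 := by
    intro j
    have := mv_bound Sx e₂ ((ℓ:ℤ) * m) (B:ℤ) hSx he₂ j
    simp only [Fintype.card_fin] at this
    calc |(Sxᵀ *ᵥ e₂) j| ≤ (m:ℤ) * ((ℓ:ℤ) * m) * B := this
      _ = M1 := by rw [hM1]; ring
  have hRbe : ∀ j, |(Rbarᵀ *ᵥ e₁) j| ≤ M1 := by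
    intro j
    have := mv_bound Rbar e₁ (m:ℤ) (B:ℤ) hRbar he₁ j
    simp only [Fintype.card_fin] at this
    calc |(Rbarᵀ *ᵥ e₁) j| ≤ (m:ℤ) * (m:ℤ) * B := this
      _ ≤ M1 := by rw [hM1]; nlinarith
  -- bounds on the concatenated vectors
  have hx₁ : ∀ i, |Sum.elim e₁ (Rxᵀ *ᵥ e₁) i| ≤ M1 := by
    rintro (i | i)
    · exact le_trans (he₁ i) hBM1
    · exact hRxe i
  have hx₂ : ∀ i, |Sum.elim e₁ (Rbarᵀ *ᵥ e₁) i| ≤ M1 := by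
    rintro (i | i)
    · exact le_trans (he₁ i) hBM1
    · exact hRbe i
  have h2m : ((Fintype.card (Fin m ⊕ Fin m) : ℕ) : ℤ) = 2 * m := by
    simp [Fintype.card_sum]; ring
  have hZ₁e : ∀ j, |(Z₁ᵀ *ᵥ Sum.elim e₁ (Rxᵀ *ᵥ e₁)) j| ≤ 2 * m * β * M1 := by
    intro j
    have := mv_bound Z₁ _ (β:ℤ) M1 hZ₁ hx₁ j
    rw [h2m] at this
    linarith
  have hZ₂e : ∀ j, |(Z₂ᵀ *ᵥ Sum.elim e₁ (Rbarᵀ *ᵥ e₁)) j| ≤ 2 * m * β * M1 := by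
    intro j
    have := mv_bound Z₂ _ (β:ℤ) M1 hZ₂ hx₂ j
    rw [h2m] at this
    linarith
  have herr' : ∀ j, |(Z₁ᵀ *ᵥ Sum.elim e₁ (Rxᵀ *ᵥ e₁)
      + Z₂ᵀ *ᵥ Sum.elim e₁ (Rbarᵀ *ᵥ e₁)) j| ≤ 4 * m * β * M1 := by
    intro j
    have := abs_add_le ((Z₁ᵀ *ᵥ Sum.elim e₁ (Rxᵀ *ᵥ e₁)) j)
      ((Z₂ᵀ *ᵥ Sum.elim e₁ (Rbarᵀ *ᵥ e₁)) j)
    have h1 := hZ₁e j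
    have h2 := hZ₂e j
    calc |(Z₁ᵀ *ᵥ Sum.elim e₁ (Rxᵀ *ᵥ e₁)
        + Z₂ᵀ *ᵥ Sum.elim e₁ (Rbarᵀ *ᵥ e₁)) j|
        = |(Z₁ᵀ *ᵥ Sum.elim e₁ (Rxᵀ *ᵥ e₁)) j
          + (Z₂ᵀ *ᵥ Sum.elim e₁ (Rbarᵀ *ᵥ e₁)) j| := rfl
      _ ≤ _ := this
      _ ≤ 4 * m * β * M1 := by linarith
  set Mx : ℤ := max (max (B : ℤ) M1) (4 * m * β * M1) with hMx
  have hv : ∀ i, |Sum.elim e₂ (Sum.elim (Sxᵀ *ᵥ e₂)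
      (Z₁ᵀ *ᵥ Sum.elim e₁ (Rxᵀ *ᵥ e₁)
        + Z₂ᵀ *ᵥ Sum.elim e₁ (Rbarᵀ *ᵥ e₁))) i| ≤ Mx := by
    rintro (i | i | i)
    · exact le_trans (he₂ i) (le_trans (le_max_left _ _) (le_max_left _ _))
    · exact le_trans (hSxe i) (le_trans (le_max_right _ _) (le_max_left _ _))
    · exact le_trans (herr' i) (le_max_right _ _)
  have h3m : ((Fintype.card (Fin m ⊕ (Fin m ⊕ Fin m)) : ℕ) : ℤ) = 3 * m := by
    simp [Fintype.card_sum]; ring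
  constructor
  · intro j
    have hZv := mv_bound Z _ (β:ℤ) Mx hZ hv j
    rw [h3m] at hZv
    have : |(e - Zᵀ *ᵥ Sum.elim e₂ (Sum.elim (Sxᵀ *ᵥ e₂)
        (Z₁ᵀ *ᵥ Sum.elim e₁ (Rxᵀ *ᵥ e₁)
          + Z₂ᵀ *ᵥ Sum.elim e₁ (Rbarᵀ *ᵥ e₁)))) j|
        ≤ |e j| + |(Zᵀ *ᵥ Sum.elim e₂ (Sum.elim (Sxᵀ *ᵥ e₂)
          (Z₁ᵀ *ᵥ Sum.elim e₁ (Rxᵀ *ᵥ e₁)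
            + Z₂ᵀ *ᵥ Sum.elim e₁ (Rbarᵀ *ᵥ e₁)))) j| := abs_sub _ _
    have he' := he j
    linarith
  · have hM1nn : (0:ℤ) ≤ M1 := by linarith
    have hfac : (1:ℤ) ≤ 1 + 4 * m * β := by nlinarith
    have hMM : M1 ≤ M1 * (1 + 4 * m * β) := le_mul_of_one_le_right hM1nn hfac
    have hMxle : Mx ≤ M1 * (1 + 4 * m * β) := by
      apply max_le
      · exact max_le (hBM1.trans hMM) hMM
      · calc 4 * (m:ℤ) * β * M1 = M1 * (4 * m * β) := by ring
          _ ≤ M1 * (1 + 4 * m * β) :=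
            mul_le_mul_of_nonneg_left (by linarith) hM1nn
    have h3 : (0:ℤ) ≤ 3 * m * β := by positivity
    have : 3 * (m:ℤ) * β * Mx ≤ 3 * m * β * (M1 * (1 + 4 * m * β)) :=
      mul_le_mul_of_nonneg_left hMxle h3
    have heq : (B:ℤ) * (1 + 3 * m * β * ℓ * m ^ 2 * (1 + 4 * m * β))
        = B + 3 * m * β * (M1 * (1 + 4 * m * β)) := by rw [hM1]; ring
    rw [heq]
    linarith
end
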